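/- Consider the Game of Graph Nim on the graph H₁ (path A–B–C–D with edges AB, BC, CD, plus a disjoint edge EF), with w(AB), w(CD), w(EF) positive. If the bitwise XOR of w(AB), w(CD), w(EF) is nonzero and the highest-order bit in which this XOR is set is also set in w(AB) or in w(CD), then the configuration is winning for the first player. Moreover, if w(BC) ≥ 1 and the XOR of w(AB), w(CD), w(EF) is zero, the configuration is also winning for the first player. -/

import Mathlib

namespace GraphNim

variable {V E : Type} [Fintype E]

/-- A legal move in the Game of Graph Nim: choose a vertex `v` and weakly decrease
the weights of edges incident to `v` (all other edges unchanged), strictly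
decreasing the total weight. -/
def Move (inc : V → E → Prop) (w w' : E → ℕ) : Prop :=
  ∃ v : V, (∀ e, w' e ≤ w e) ∧ (∀ e, ¬ inc v e → w' e = w e) ∧
    (∑ e, w' e) < (∑ e, w e)

/-- A configuration is losing for the player to move: every legal move leads to a
non-losing configuration (the all-zero configuration is vacuously losing). -/
def Losing (inc : V → E → Prop) (w : E → ℕ) : Prop :=
  ∀ w', Move inc w w' → ¬ Losing inc w'
termination_by ∑ e, w e
decreasing_by
  rename_i h
  obtain ⟨v, _, _, h3⟩ := h
  exact h3

/-- A configuration is winning for the player to move: some legal move leads to a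
losing configuration. -/
def Winning (inc : V → E → Prop) (w : E → ℕ) : Prop :=
  ∃ w', Move inc w w' ∧ Losing inc w'

end GraphNim

open GraphNim

/-- Endpoints of the edges of the graph `H₁` (path `A–B–C–D` plus a disjoint edge
`EF`): vertices `A = 0, …, F = 5`, edges `AB = 0, BC = 1, CD = 2, EF = 3`. -/
def h1Ends : Fin 4 → Fin 6 × Fin 6
  | 0 => (0, 1)
  | 1 => (1, 2)
  | 2 => (2, 3)
  | 3 => (4, 5)

def h1Inc (v : Fin 6) (e : Fin 4) : Prop := (h1Ends e).1 = v ∨ (h1Ends e).2 = v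

/-!
With `w(BC) = 0`, no vertex of `H₁` touches two of the remaining edges `AB`, `CD`, `EF`, so every
move lowers exactly one of them: the game is three-heap Nim, lost for the player to move exactly
when the XOR of the three weights vanishes (Bouton). In general, on any graph whose weight sits on
a matching, a position of nim-sum `0` is lost: a move changes one heap and so the nim-sum, and the
usual Nim reply, lowering a heap having the top bit of the nim-sum, restores it.

The first player on `H₁` therefore wins by playing at `B` or `C`: empty `BC` and, if the XOR is
nonzero with its top bit in `w(AB)` (resp. `w(CD)`), lower that edge to make the XOR vanish.
-/

namespace Nat

theorem xor_lt_of_testBit_log2 {a x : ℕ} (hx : x ≠ 0) (ha : a.testBit x.log2 = true) :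
    a ^^^ x < a :=
  lt_of_testBit x.log2 (by simp [ha, testBit_log2 hx]) ha fun j hj => by
    simp [testBit_lt_two_pow (lt_log2_self.trans_le (Nat.pow_le_pow_right two_pos hj))]

end Nat

section NimSum

variable {E : Type*} {s : Finset E} {w : E → ℕ}

def nimSum (s : Finset E) (w : E → ℕ) : ℕ := s.fold (· ^^^ ·) 0 w

@[simp]
theorem nimSum_empty (w : E → ℕ) : nimSum ∅ w = 0 := rfl

@[simp]
theorem nimSum_singleton (a : E) (w : E → ℕ) : nimSum {a} w = w a :=
  Finset.fold_singleton.trans (Nat.xor_zero _)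

@[simp]
theorem nimSum_insert [DecidableEq E] {a : E} (ha : a ∉ s) :
    nimSum (insert a s) w = w a ^^^ nimSum s w :=
  Finset.fold_insert ha

theorem nimSum_congr {w' : E → ℕ} (h : ∀ e ∈ s, w e = w' e) : nimSum s w = nimSum s w' :=
  Finset.fold_congr h

theorem nimSum_update [DecidableEq E] {e : E} (he : e ∈ s) (n : ℕ) :
    nimSum s (Function.update w e n) = nimSum s w ^^^ w e ^^^ n := by
  have hrest : nimSum (s.erase e) (Function.update w e n) = nimSum (s.erase e) w :=
    nimSum_congr fun x hx => Function.update_of_ne (Finset.ne_of_mem_erase hx) n w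
  rw [← Finset.insert_erase he, nimSum_insert (Finset.notMem_erase e s),
    nimSum_insert (Finset.notMem_erase e s), Function.update_self, hrest]
  grind

theorem exists_mem_testBit_of_testBit_nimSum {i : ℕ} (h : (nimSum s w).testBit i = true) :
    ∃ e ∈ s, (w e).testBit i = true := by
  classical
  induction s using Finset.induction_on with
  | empty => simp at h
  | insert a s ha ih =>
    rw [nimSum_insert ha, Nat.testBit_xor] at h
    by_cases hwa : (w a).testBit i = true
    · exact ⟨a, Finset.mem_insert_self a s, hwa⟩
    · obtain ⟨e, he, hwe⟩ := ih (by simpa [hwa] using h)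
      exact ⟨e, Finset.mem_insert_of_mem he, hwe⟩

theorem exists_mem_xor_nimSum_lt (h : nimSum s w ≠ 0) : ∃ e ∈ s, w e ^^^ nimSum s w < w e := by
  obtain ⟨e, he, hbit⟩ := exists_mem_testBit_of_testBit_nimSum (Nat.testBit_log2 h)
  exact ⟨e, he, Nat.xor_lt_of_testBit_log2 h hbit⟩

end NimSum

namespace GraphNim

variable {V E : Type} [Fintype E] {inc : V → E → Prop} {w w' : E → ℕ}

theorem losing_iff : Losing inc w ↔ ∀ w', Move inc w w' → ¬ Losing inc w' := by
  rw [Losing]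

theorem Move.le (h : Move inc w w') (e : E) : w' e ≤ w e :=
  h.choose_spec.1 e

theorem Move.sum_lt (h : Move inc w w') : ∑ e, w' e < ∑ e, w e :=
  h.choose_spec.2.2

theorem move_of_lt {v : V} (hle : ∀ e, w' e ≤ w e) (hfix : ∀ e, ¬ inc v e → w' e = w e) {e : E}
    (hlt : w' e < w e) : Move inc w w' :=
  ⟨v, hle, hfix, Finset.sum_lt_sum (fun e _ => hle e) ⟨e, Finset.mem_univ e, hlt⟩⟩

theorem move_update [DecidableEq E] {v : V} {e : E} (hve : inc v e) {n : ℕ} (hn : n < w e) :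
    Move inc w (Function.update w e n) := by
  refine move_of_lt (v := v) (e := e) (fun x => ?_) (fun x hx => ?_) (by simpa using hn)
  · rcases eq_or_ne x e with rfl | hxe <;> simp [*, hn.le]
  · exact Function.update_of_ne (show x ≠ e by rintro rfl; exact hx hve) n w

theorem move_update_update [DecidableEq E] {v : V} {e₁ e₂ : E} (hv₁ : inc v e₁)
    (hv₂ : inc v e₂) {n₁ n₂ : ℕ} (hn₁ : n₁ ≤ w e₁) (hn₂ : n₂ < w e₂) :
    Move inc w (Function.update (Function.update w e₁ n₁) e₂ n₂) := by
  refine move_of_lt (v := v) (e := e₂) (fun x => ?_) (fun x hx => ?_) (by simpa using hn₂)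
  · simp only [Function.update_apply]
    split_ifs <;> grind
  · have h₁ : x ≠ e₁ := by rintro rfl; exact hx hv₁
    have h₂ : x ≠ e₂ := by rintro rfl; exact hx hv₂
    simp [h₁, h₂]

theorem losing_of_forall_move_exists_move (S : (E → ℕ) → Prop)
    (hS : ∀ w w', S w → Move inc w w' → ∃ w'', Move inc w' w'' ∧ S w'') (hw : S w) :
    Losing inc w := by
  induction hsum : ∑ e, w e using Nat.strong_induction_on generalizing w with
  | _ n ih =>
    refine losing_iff.mpr fun w' hm hw' => ?_
    obtain ⟨w'', hm', hw''⟩ := hS w w' hw hm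
    exact losing_iff.mp hw' w'' hm' (ih _ (hsum ▸ hm'.sum_lt.trans hm.sum_lt) hw'' rfl)

section Matching

variable {M : Finset E}

theorem Move.exists_eq_update [DecidableEq E]
    (hM : ∀ v, ∀ e ∈ M, ∀ e' ∈ M, inc v e → inc v e' → e = e') (hw : ∀ e ∉ M, w e = 0) (h : Move inc w w') :
    ∃ e ∈ M, w' e < w e ∧ w' = Function.update w e (w' e) := by
  obtain ⟨v, hle, hfix, hlt⟩ := h
  obtain ⟨e, -, he⟩ := Finset.exists_lt_of_sum_lt hlt
  have heM : e ∈ M := by_contra fun heM => by simp [hw e heM] at he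
  have hve : inc v e := by_contra fun hve => (hfix e hve).not_lt he
  refine ⟨e, heM, he, funext fun x => ?_⟩
  rcases eq_or_ne x e with rfl | hxe
  · simp
  rw [Function.update_of_ne hxe]
  by_cases hxM : x ∈ M
  · exact hfix x fun hvx => hxe (hM v x hxM e heM hvx hve)
  · exact le_antisymm (hle x) (hw x hxM ▸ Nat.zero_le _)

theorem exists_move_nimSum_eq_zero (hinc : ∀ e ∈ M, ∃ v, inc v e) (h : nimSum M w ≠ 0) :
    ∃ w', Move inc w w' ∧ (∀ e ∉ M, w' e = w e) ∧ nimSum M w' = 0 := by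
  classical
  obtain ⟨e, heM, hlt⟩ := exists_mem_xor_nimSum_lt h
  obtain ⟨v, hve⟩ := hinc e heM
  refine ⟨_, move_update hve hlt, fun x hx =>
    Function.update_of_ne (show x ≠ e by rintro rfl; exact hx heM) _ _, ?_⟩
  rw [nimSum_update heM]
  grind

theorem losing_of_nimSum_eq_zero (hM : ∀ v, ∀ e ∈ M, ∀ e' ∈ M, inc v e → inc v e' → e = e')
    (hinc : ∀ e ∈ M, ∃ v, inc v e) (hw : ∀ e ∉ M, w e = 0) (h : nimSum M w = 0) :
    Losing inc w := by
  classical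
  refine losing_of_forall_move_exists_move (fun w => (∀ e ∉ M, w e = 0) ∧ nimSum M w = 0)
    (fun w w' ⟨hw, h⟩ hm => ?_) ⟨hw, h⟩
  obtain ⟨e, heM, hlt, hw'⟩ := hm.exists_eq_update hM hw
  have hne : nimSum M w' ≠ 0 := by
    rw [hw', nimSum_update heM, h, Nat.zero_xor]
    exact Nat.xor_ne_zero_iff.mpr hlt.ne'
  obtain ⟨w'', hm', hfix, h''⟩ := exists_move_nimSum_eq_zero hinc hne
  exact ⟨w'', hm', fun x hx => (hfix x hx).trans (Nat.le_zero.mp (hw x hx ▸ hm.le x)), h''⟩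

end Matching

end GraphNim

instance (v : Fin 6) (e : Fin 4) : Decidable (h1Inc v e) := by
  unfold h1Inc; infer_instance

theorem h1Inc_fst (e : Fin 4) : h1Inc (h1Ends e).1 e := Or.inl rfl

theorem h1Inc_snd (e : Fin 4) : h1Inc (h1Ends e).2 e := Or.inr rfl

theorem h1_losing {w : Fin 4 → ℕ} (hBC : w 1 = 0) (hxor : w 0 ^^^ w 2 ^^^ w 3 = 0) :
    Losing h1Inc w := by
  refine losing_of_nimSum_eq_zero (M := {0, 2, 3}) (by decide)
    (fun e _ => ⟨_, h1Inc_fst e⟩) (fun e he => ?_) ?_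
  · obtain rfl : e = 1 := by revert e; decide
    exact hBC
  · simpa [Nat.xor_assoc] using hxor

theorem h1_winning_xor_general (w : Fin 4 → ℕ) :
    ((w 0 ^^^ w 2 ^^^ w 3 ≠ 0 ∧
        ((w 0).testBit (Nat.log2 (w 0 ^^^ w 2 ^^^ w 3)) = true ∨
          (w 2).testBit (Nat.log2 (w 0 ^^^ w 2 ^^^ w 3)) = true)) →
      Winning h1Inc w) ∧
    ((1 ≤ w 1 ∧ w 0 ^^^ w 2 ^^^ w 3 = 0) → Winning h1Inc w) := by
  constructor
  · rintro ⟨hne, hAB | hCD⟩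
    · have hlt : w 2 ^^^ w 3 < w 0 := by
        simpa [← Nat.xor_assoc] using Nat.xor_lt_of_testBit_log2 hne hAB
      exact ⟨_, move_update_update (h1Inc_fst 1) (h1Inc_snd 0) (Nat.zero_le _) hlt,
        h1_losing (by simp) (by simp)⟩
    · have hlt : w 0 ^^^ w 3 < w 2 := by
        simpa [Nat.xor_comm (w 0), Nat.xor_assoc] using Nat.xor_lt_of_testBit_log2 hne hCD
      exact ⟨_, move_update_update (h1Inc_snd 1) (h1Inc_fst 2) (Nat.zero_le _) hlt,
        h1_losing (by simp) (by simp)⟩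
  · rintro ⟨hBC, hxor⟩
    exact ⟨_, move_update (h1Inc_fst 1) hBC, h1_losing (by simp) (by simpa using hxor)⟩

/-- On `H₁` with `w(AB), w(CD), w(EF)` positive: if the XOR of `w(AB), w(CD),
w(EF)` is nonzero and its highest-order set bit (at index `log₂` of the XOR) is
set in `w(AB)` or in `w(CD)`, the configuration is winning; and if `w(BC) ≥ 1`
and the XOR is zero, the configuration is also winning. -/
theorem h1_winning_xor (w : Fin 4 → ℕ)
    (hAB : 0 < w 0) (hCD : 0 < w 2) (hEF : 0 < w 3) :
    ((w 0 ^^^ w 2 ^^^ w 3 ≠ 0 ∧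
        ((w 0).testBit (Nat.log2 (w 0 ^^^ w 2 ^^^ w 3)) = true ∨
          (w 2).testBit (Nat.log2 (w 0 ^^^ w 2 ^^^ w 3)) = true)) →
      Winning h1Inc w) ∧
    ((1 ≤ w 1 ∧ w 0 ^^^ w 2 ^^^ w 3 = 0) → Winning h1Inc w) :=
  h1_winning_xor_general w
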